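/- Let V, W be finite-dimensional real vector spaces, φ : V → W a surjective linear map, and D_V ⊆ V × V* a Lagrangian subspace. Then the pushforward φ(D_V) = {(φ(v), β) : β ∈ W*, (v, β ∘ φ) ∈ D_V} is a Lagrangian subspace of W × W*. -/

import Mathlib

open Module

/-- The Pontryagin pairing `⟨(u,α),(v,β)⟩ = β(u) + α(v)` on `V × V*`. -/
noncomputable def pontryaginPair (V : Type*) [AddCommGroup V] [Module ℝ V] :
    LinearMap.BilinForm ℝ (V × Module.Dual ℝ V) :=
  LinearMap.mk₂ ℝ (fun p q => q.2 p.1 + p.2 q.1)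
    (by intro p p' q; simp; ring)
    (by intro c p q; simp; ring)
    (by intro p q q'; simp; ring)
    (by intro c p q; simp; ring)

variable {V W : Type*} [AddCommGroup V] [Module ℝ V] [AddCommGroup W] [Module ℝ W]

/-- The backward image `φ*D = {(v,α) : ∃ (w,β) ∈ D, φ v = w, α = β ∘ φ}` of a subspace
`D ⊆ W × W*` under a linear map `φ : V → W`. -/
noncomputable def backwardImage (φ : V →ₗ[ℝ] W) (D : Submodule ℝ (W × Module.Dual ℝ W)) :
    Submodule ℝ (V × Module.Dual ℝ V) :=
  Submodule.map (LinearMap.prodMap (LinearMap.id : V →ₗ[ℝ] V) φ.dualMap)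
    (Submodule.comap (LinearMap.prodMap φ (LinearMap.id : Module.Dual ℝ W →ₗ[ℝ] Module.Dual ℝ W)) D)

/-- The forward image `φ(D) = {(φ v, β) : (v, β ∘ φ) ∈ D}` of a subspace `D ⊆ V × V*`
under a linear map `φ : V → W`. -/
noncomputable def forwardImage (φ : V →ₗ[ℝ] W) (D : Submodule ℝ (V × Module.Dual ℝ V)) :
    Submodule ℝ (W × Module.Dual ℝ W) :=
  Submodule.map (LinearMap.prodMap φ (LinearMap.id : Module.Dual ℝ W →ₗ[ℝ] Module.Dual ℝ W))
    (Submodule.comap (LinearMap.prodMap (LinearMap.id : V →ₗ[ℝ] V) φ.dualMap) D)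

/-!
Pulling back along `φ` identifies the pairing of `(φ v, β)` and `(φ v', β')` with that of
`(v, β ∘ φ)` and `(v', β' ∘ φ)`, so `φ(D)` inherits isotropy from `D`. For the converse, take
`(φ v₀, γ)` orthogonal to `φ(D)`. The annihilator of `ker φ × 0` consists of the pairs whose
covector factors through `φ`, so every element of `(D + ker φ × 0)^⊥ ⊆ D^⊥ = D` is of the
form `(v, β ∘ φ)` with `(φ v, β) ∈ φ(D)`. Hence `(v₀, γ ∘ φ)` lies in
`(D + ker φ × 0)^⊥⊥ = D + ker φ × 0`, which says exactly that `(φ v₀, γ) ∈ φ(D)`.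
-/

section

open LinearMap.BilinForm

@[simp]
lemma pontryaginPair_apply (p q : V × Dual ℝ V) :
    pontryaginPair V p q = q.2 p.1 + p.2 q.1 := rfl

lemma pontryaginPair_isRefl : (pontryaginPair V).IsRefl := by
  intro p q h
  rw [pontryaginPair_apply] at h ⊢
  linarith

lemma pontryaginPair_nondegenerate : (pontryaginPair V).Nondegenerate := by
  refine (LinearMap.IsRefl.nondegenerate_iff_separatingLeft (B := pontryaginPair V)
    pontryaginPair_isRefl).mpr fun p h => ?_
  have h₁ : p.1 = 0 := (forall_dual_apply_eq_zero_iff ℝ p.1).mp fun β => by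
    simpa using h (0, β)
  have h₂ : p.2 = 0 := LinearMap.ext fun v => by simpa using h (v, 0)
  exact Prod.ext h₁ h₂

lemma pontryaginPair_map (φ : V →ₗ[ℝ] W) (v v' : V) (β β' : Dual ℝ W) :
    pontryaginPair W (φ v, β) (φ v', β') =
      pontryaginPair V (v, φ.dualMap β) (v', φ.dualMap β') := rfl

lemma pontryaginPair_orthogonal_ker_prod_bot (φ : V →ₗ[ℝ] W) :
    (pontryaginPair V).orthogonal ((LinearMap.ker φ).prod ⊥) = (⊤ : Submodule ℝ V).prod
      (LinearMap.range φ.dualMap) := by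
  ext ⟨v, α⟩
  simp only [Submodule.mem_prod, Submodule.mem_top, true_and,
    LinearMap.range_dualMap_eq_dualAnnihilator_ker, Submodule.mem_dualAnnihilator]
  constructor
  · intro h k hk
    simpa using h (k, 0) (Submodule.mem_prod.mpr ⟨hk, Submodule.zero_mem _⟩)
  · rintro h ⟨k, α'⟩ hk
    obtain ⟨hkφ, rfl⟩ : k ∈ LinearMap.ker φ ∧ α' = 0 := by simpa using hk
    simp [h k hkφ]

lemma mk_mem_forwardImage {φ : V →ₗ[ℝ] W} {D : Submodule ℝ (V × Dual ℝ V)} {v : V}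
    {β : Dual ℝ W} (h : (v, φ.dualMap β) ∈ D) : (φ v, β) ∈ forwardImage φ D :=
  Submodule.mem_map_of_mem (p := Submodule.comap _ D) (r := (v, β)) h

lemma mk_mem_forwardImage_of_mem_sup {φ : V →ₗ[ℝ] W} {D : Submodule ℝ (V × Dual ℝ V)} {v : V}
    {β : Dual ℝ W} (h : (v, φ.dualMap β) ∈ D ⊔ (LinearMap.ker φ).prod ⊥) :
    (φ v, β) ∈ forwardImage φ D := by
  obtain ⟨d, hd, ⟨k, α⟩, hk, hdk⟩ := Submodule.mem_sup.mp h
  obtain ⟨hkφ, rfl⟩ : k ∈ LinearMap.ker φ ∧ α = 0 := by simpa using hk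
  obtain rfl := eq_sub_of_add_eq hdk
  rw [Prod.mk_sub_mk, sub_zero] at hd
  have hφk : φ (v - k) = φ v := by rw [map_sub, LinearMap.mem_ker.mp hkφ, sub_zero]
  exact hφk ▸ mk_mem_forwardImage hd

lemma forwardImage_le_orthogonal (φ : V →ₗ[ℝ] W) {D : Submodule ℝ (V × Dual ℝ V)}
    (hD : D ≤ (pontryaginPair V).orthogonal D) :
    forwardImage φ D ≤ (pontryaginPair W).orthogonal (forwardImage φ D) := by
  rintro _ ⟨⟨v, β⟩, hv, rfl⟩ _ ⟨⟨v', β'⟩, hv', rfl⟩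
  exact (pontryaginPair_map φ v' v β' β).trans (hD hv _ hv')

lemma orthogonal_forwardImage_le [FiniteDimensional ℝ V] {φ : V →ₗ[ℝ] W}
    (hφ : Function.Surjective φ) {D : Submodule ℝ (V × Dual ℝ V)}
    (hD : (pontryaginPair V).orthogonal D ≤ D) :
    (pontryaginPair W).orthogonal (forwardImage φ D) ≤ forwardImage φ D := by
  rintro ⟨w, γ⟩ h
  obtain ⟨v₀, rfl⟩ := hφ w
  apply mk_mem_forwardImage_of_mem_sup
  rw [← orthogonal_orthogonal pontryaginPair_nondegenerate pontryaginPair_isRefl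
    (D ⊔ (LinearMap.ker φ).prod ⊥)]
  rintro ⟨v, α⟩ hx
  have hvD : (v, α) ∈ D := hD (orthogonal_le le_sup_left hx)
  have hα := orthogonal_le le_sup_right hx
  rw [pontryaginPair_orthogonal_ker_prod_bot] at hα
  obtain ⟨β, rfl⟩ := (Submodule.mem_prod.mp hα).2
  exact (pontryaginPair_map φ v v₀ β γ).symm.trans (h _ (mk_mem_forwardImage hvD))

end

theorem forwardImage_lagrangian_general [FiniteDimensional ℝ V]
    (φ : V →ₗ[ℝ] W) (hφ : Function.Surjective φ) (D : Submodule ℝ (V × Module.Dual ℝ V))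
    (hD : LinearMap.BilinForm.orthogonal (pontryaginPair V) D = D) :
    LinearMap.BilinForm.orthogonal (pontryaginPair W) (forwardImage φ D)
      = forwardImage φ D :=
  le_antisymm (orthogonal_forwardImage_le hφ hD.le) (forwardImage_le_orthogonal φ hD.ge)

/-- The forward image of a Lagrangian subspace under a surjective linear map is Lagrangian. -/
theorem forwardImage_lagrangian [FiniteDimensional ℝ V] [FiniteDimensional ℝ W]
    (φ : V →ₗ[ℝ] W) (hφ : Function.Surjective φ) (D : Submodule ℝ (V × Module.Dual ℝ V))
    (hD : LinearMap.BilinForm.orthogonal (pontryaginPair V) D = D) :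
    LinearMap.BilinForm.orthogonal (pontryaginPair W) (forwardImage φ D)
      = forwardImage φ D :=
  forwardImage_lagrangian_general φ hφ D hD
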